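/- arXiv:2010.05199 — 2 statements merged into one kernel-verified Lean document; each statement's English description precedes it below -/
import Mathlib

section
/- Let $P$ be a monic polynomial of degree $d \ge 2$. For every $z \in \mathbb{C}$ the limit $G(z) = \lim_{n \to \infty} d^{-n} \log^+ |P^n(z)|$ exists, and the resulting Green function satisfies $G(P(z)) = d \cdot G(z)$ for all $z \in \mathbb{C}$. -/
/-!
Since `P(w) ~ w ^ d` at infinity, `log⁺ |P w| - d * log⁺ |w|` is bounded on `ℂ`, say by
`C`. Hence consecutive terms of `d⁻ⁿ log⁺ |Pⁿ z|` differ by at most `C / dⁿ⁺¹`, the sequence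
is Cauchy, and the functional equation passes to the limit because the sequence at `P z` is
`d` times the sequence at `z` shifted by one.
-/

open Polynomial Filter Topology Bornology Asymptotics Real

theorem Asymptotics.IsBigO.exists_eventually_posLog_norm_le {α E F : Type*}
    [SeminormedAddGroup E] [Norm F]
    {l : Filter α} {f : α → E} {g : α → F} (h : f =O[l] g) :
    ∃ C, ∀ᶠ x in l, log⁺ ‖f x‖ ≤ C + log⁺ ‖g x‖ := by
  obtain ⟨c, hc⟩ := h.bound
  exact ⟨log⁺ c, hc.mono fun x hx => (posLog_le_posLog (norm_nonneg _) hx).trans posLog_mul⟩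

theorem Continuous.exists_forall_norm_le_of_eventually_cobounded {E F : Type*}
    [PseudoMetricSpace E] [ProperSpace E] [SeminormedAddGroup F] {f : E → F} (hf : Continuous f)
    {C : ℝ} (h : ∀ᶠ x in cobounded E, ‖f x‖ ≤ C) : ∃ C', ∀ x, ‖f x‖ ≤ C' := by
  set s := {x | ‖f x‖ ≤ C}ᶜ
  have hs : IsBounded s := isBounded_compl_iff.mpr h
  obtain ⟨C₀, hC₀⟩ := hs.isCompact_closure.exists_bound_of_continuousOn hf.continuousOn
  refine ⟨max C₀ C, fun x => ?_⟩
  by_cases hx : x ∈ s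
  · exact (hC₀ x (subset_closure hx)).trans (le_max_left _ _)
  · exact (not_not.mp hx).trans (le_max_right _ _)

namespace Polynomial

variable {𝕜 : Type*} [NormedField 𝕜]

theorem eventually_abs_posLog_norm_eval_sub_le (P : 𝕜[X]) :
    ∃ C, ∀ᶠ w in cobounded 𝕜, |log⁺ ‖P.eval w‖ - P.natDegree * log⁺ ‖w‖| ≤ C := by
  rcases eq_or_ne P 0 with rfl | hP
  · exact ⟨0, by simp⟩
  have hequiv := isEquivalent_cobounded_leading_monomial (P := P)
  have hlead : P.leadingCoeff ≠ 0 := leadingCoeff_ne_zero.mpr hP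
  obtain ⟨C₁, hC₁⟩ :=
    (hequiv.isBigO.trans (isBigO_const_mul_self _ _ _)).exists_eventually_posLog_norm_le
  obtain ⟨C₂, hC₂⟩ :=
    ((isBigO_self_const_mul hlead _ _).trans hequiv.isBigO_symm).exists_eventually_posLog_norm_le
  refine ⟨max C₁ C₂, (hC₁.and hC₂).mono fun w ⟨h₁, h₂⟩ => ?_⟩
  simp only [norm_pow, posLog_pow] at h₁ h₂
  rw [abs_sub_le_iff]
  constructor <;> linarith [le_max_left C₁ C₂, le_max_right C₁ C₂]

theorem exists_abs_posLog_norm_eval_sub_le [ProperSpace 𝕜] (P : 𝕜[X]) :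
    ∃ C, ∀ w, |log⁺ ‖P.eval w‖ - P.natDegree * log⁺ ‖w‖| ≤ C := by
  obtain ⟨C, hC⟩ := P.eventually_abs_posLog_norm_eval_sub_le
  exact Continuous.exists_forall_norm_le_of_eventually_cobounded
    (f := fun w => log⁺ ‖P.eval w‖ - P.natDegree * log⁺ ‖w‖) (by fun_prop) hC

end Polynomial

section RenormalizedIterates

variable {α : Type*} (f : α → α) (L : α → ℝ) {d C : ℝ}

theorem dist_div_pow_iterate_succ_le (hd : 0 < d) (hL : ∀ x, |L (f x) - d * L x| ≤ C)
    (x : α) (n : ℕ) :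
    dist (L (f^[n] x) / d ^ n) (L (f^[n + 1] x) / d ^ (n + 1)) ≤ C / d * (1 / d) ^ n := by
  have hdiff : L (f^[n + 1] x) / d ^ (n + 1) - L (f^[n] x) / d ^ n
      = (L (f (f^[n] x)) - d * L (f^[n] x)) / d ^ (n + 1) := by
    rw [Function.iterate_succ_apply']
    field_simp
    ring
  rw [dist_comm, Real.dist_eq, hdiff, abs_div, abs_of_pos (pow_pos hd _)]
  calc |L (f (f^[n] x)) - d * L (f^[n] x)| / d ^ (n + 1) ≤ C / d ^ (n + 1) := by
        gcongr
        exact hL _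
    _ = C / d * (1 / d) ^ n := by rw [div_pow, one_pow, pow_succ']; ring

theorem exists_tendsto_div_pow_iterate (hd : 1 < d) (hL : ∀ x, |L (f x) - d * L x| ≤ C) :
    ∃ G : α → ℝ, (∀ x, Tendsto (fun n => L (f^[n] x) / d ^ n) atTop (𝓝 (G x))) ∧
      ∀ x, G (f x) = d * G x := by
  have hd₀ : 0 < d := zero_lt_one.trans hd
  have hcauchy (x : α) : CauchySeq fun n => L (f^[n] x) / d ^ n :=
    cauchySeq_of_le_geometric (1 / d) (C / d) ((div_lt_one hd₀).mpr hd)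
      (dist_div_pow_iterate_succ_le f L hd₀ hL x)
  choose G hG using fun x => cauchySeq_tendsto_of_complete (hcauchy x)
  refine ⟨G, hG, fun x => tendsto_nhds_unique (hG (f x)) ?_⟩
  have hshift : (fun n => L (f^[n] (f x)) / d ^ n)
      = fun n => d * (L (f^[n + 1] x) / d ^ (n + 1)) := by
    ext n
    rw [Function.iterate_succ_apply]
    field_simp
    ring
  rw [hshift]
  exact ((hG x).comp (tendsto_add_atTop_nat 1)).const_mul d

end RenormalizedIterates

theorem green_function_exists_general (d : ℕ) (hd : 2 ≤ d) (P : Polynomial ℂ)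
    (hdeg : P.natDegree = d) :
    ∃ G : ℂ → ℝ,
      (∀ z : ℂ, Filter.Tendsto
        (fun n : ℕ => Real.log (max (‖(fun w => P.eval w)^[n] z‖) 1) / d ^ n)
        Filter.atTop (nhds (G z))) ∧
      ∀ z : ℂ, G (P.eval z) = d * G z := by
  have hlog (w : ℂ) : Real.log (max ‖w‖ 1) = log⁺ ‖w‖ := by
    rw [max_comm, posLog_eq_log_max_one (norm_nonneg w)]
  obtain ⟨C, hC⟩ := P.exists_abs_posLog_norm_eval_sub_le
  simp only [hlog]
  exact exists_tendsto_div_pow_iterate (fun w => P.eval w) (fun w => log⁺ ‖w‖)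
    (by exact_mod_cast hd) (hdeg ▸ hC)

/-- For a monic polynomial of degree `d ≥ 2`, the Green function
`G(z) = lim_{n} d^{-n} log⁺ |P^n(z)|` exists at every point and satisfies
`G(P(z)) = d ⬝ G(z)`. -/
theorem green_function_exists (d : ℕ) (hd : 2 ≤ d) (P : Polynomial ℂ)
    (hmonic : P.Monic) (hdeg : P.natDegree = d) :
    ∃ G : ℂ → ℝ,
      (∀ z : ℂ, Filter.Tendsto
        (fun n : ℕ => Real.log (max (‖(fun w => P.eval w)^[n] z‖) 1) / d ^ n)
        Filter.atTop (nhds (G z))) ∧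
      ∀ z : ℂ, G (P.eval z) = d * G z :=
  green_function_exists_general d hd P hdeg
end

section
/- Let $\varphi : U \to \mathbb{C}$ be real-differentiable at $z \in U$ with positive Jacobian determinant, and write $\partial \varphi(z)$ and $\bar\partial \varphi(z)$ for the Wirtinger derivatives, so that $|\partial\varphi(z)| > |\bar\partial\varphi(z)|$. Then the circular distortion satisfies $H(\varphi; z) = \dfrac{|\partial\varphi(z)| + |\bar\partial\varphi(z)|}{|\partial\varphi(z)| - |\bar\partial\varphi(z)|}$. -/
/-!
Write the differential as `L v = ∂φ · v + ∂̄φ · v̄`. On the unit circle `|L v|` ranges over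
`[|∂φ| - |∂̄φ|, |∂φ| + |∂̄φ|]`, both ends being attained when the two terms point in the
same, respectively opposite, directions. Since `φ (z + u) - φ z = L u + o(|u|)`, the supremum
and the infimum of `|φ u - φ z|` over the circle of radius `r` are `(|∂φ| ± |∂̄φ|) r + o(r)`,
so their ratio tends to `(|∂φ| + |∂̄φ|) / (|∂φ| - |∂̄φ|)`.
-/

open Filter Metric

/-- Circular distortion of a map at a point. -/
noncomputable def circDist (φ : ℂ → ℂ) (w : ℂ) : ENNReal :=
  Filter.limsup
    (fun r : ℝ =>
      (⨆ u ∈ Metric.sphere w r, edist (φ u) (φ w)) /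
      (⨅ u ∈ Metric.sphere w r, edist (φ u) (φ w)))
    (nhdsWithin 0 (Set.Ioi 0))

/-- The Wirtinger derivative `∂φ` of a real-linear map `L` on `ℂ`. -/
noncomputable def wirtingerP (L : ℂ →L[ℝ] ℂ) : ℂ :=
  (L 1 - Complex.I * L Complex.I) / 2

/-- The Wirtinger derivative `∂̄φ` of a real-linear map `L` on `ℂ`. -/
noncomputable def wirtingerQ (L : ℂ →L[ℝ] ℂ) : ℂ :=
  (L 1 + Complex.I * L Complex.I) / 2

open Topology ComplexConjugate

theorem ENNReal.tendsto_ofReal_of_eventually_mem_Icc {α : Type*} {l : Filter α}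
    {f : α → ENNReal} {c : ℝ}
    (h : ∀ t > 0, ∀ᶠ x in l,
      f x ∈ Set.Icc (ENNReal.ofReal (c - t)) (ENNReal.ofReal (c + t))) :
    Tendsto f l (𝓝 (ENNReal.ofReal c)) := by
  have exists_pos {g : ℝ → ℝ} (hg : Continuous g) (hg0 : g 0 = c) {P : ENNReal → Prop}
      (hP : ∀ᶠ y in 𝓝 (ENNReal.ofReal c), P y) : ∃ t > 0, P (ENNReal.ofReal (g t)) := by
    have hlim : Tendsto (fun t => ENNReal.ofReal (g t)) (𝓝[>] 0) (𝓝 (ENNReal.ofReal c)) :=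
      ((ENNReal.continuous_ofReal.comp hg).tendsto' 0 _ (by simp [hg0])).mono_left
        nhdsWithin_le_nhds
    obtain ⟨t, hPt, ht⟩ := (hlim.eventually hP |>.and self_mem_nhdsWithin).exists
    exact ⟨t, ht, hPt⟩
  refine tendsto_order.2 ⟨fun a ha => ?_, fun a ha => ?_⟩
  · obtain ⟨t, ht, hat⟩ :=
      exists_pos (_root_.continuous_sub_left c) (sub_zero c) (lt_mem_nhds ha)
    filter_upwards [h t ht] with x hx using hat.trans_le hx.1
  · obtain ⟨t, ht, hat⟩ := exists_pos (continuous_const_add c) (add_zero c) (gt_mem_nhds ha)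
    filter_upwards [h t ht] with x hx using hx.2.trans_lt hat

section Sphere

variable {E F : Type*} [NormedAddCommGroup E] [NormedSpace ℝ E] [NormedAddCommGroup F]
  [NormedSpace ℝ F] {φ : E → F} {L : E →L[ℝ] F} {z : E}

theorem HasFDerivAt.eventually_abs_norm_sub_le_on_sphere (hφ : HasFDerivAt φ L z) {t : ℝ}
    (ht : 0 < t) : ∀ᶠ r in 𝓝[>] (0 : ℝ), ∀ u ∈ sphere z r,
      |‖φ u - φ z‖ - ‖L (u - z)‖| ≤ t * r := by
  obtain ⟨δ, hδ, hsmall⟩ := Metric.eventually_nhds_iff.1 (hφ.isLittleO.def ht)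
  filter_upwards [Ioo_mem_nhdsGT hδ] with r hr u hu
  rw [mem_sphere] at hu
  calc |‖φ u - φ z‖ - ‖L (u - z)‖| ≤ ‖φ u - φ z - L (u - z)‖ :=
        abs_norm_sub_norm_le _ _
    _ ≤ t * ‖u - z‖ := hsmall (hu ▸ hr.2)
    _ = t * r := by rw [← dist_eq_norm, hu]

theorem ENNReal.div_ofReal_mem_Icc {a : ENNReal} {r x y : ℝ} (hr : 0 < r)
    (h : a ∈ Set.Icc (ENNReal.ofReal (x * r)) (ENNReal.ofReal (y * r))) :
    a / ENNReal.ofReal r ∈ Set.Icc (ENNReal.ofReal x) (ENNReal.ofReal y) := by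
  have h0 : ENNReal.ofReal r ≠ 0 := by simpa using hr
  rw [Set.mem_Icc, ENNReal.le_div_iff_mul_le (.inl h0) (.inl ENNReal.ofReal_ne_top),
    ENNReal.div_le_iff h0 ENNReal.ofReal_ne_top, ← ENNReal.ofReal_mul' hr.le,
    ← ENNReal.ofReal_mul' hr.le]
  exact h

theorem HasFDerivAt.tendsto_iSup_sphere_edist_div (hφ : HasFDerivAt φ L z) {M : ℝ}
    (hle : ∀ v, ‖L v‖ ≤ M * ‖v‖) (hattained : ∃ v, ‖v‖ = 1 ∧ ‖L v‖ = M) :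
    Tendsto (fun r => (⨆ u ∈ sphere z r, edist (φ u) (φ z)) / ENNReal.ofReal r) (𝓝[>] 0)
      (𝓝 (ENNReal.ofReal M)) := by
  obtain ⟨v, hv, hLv⟩ := hattained
  refine ENNReal.tendsto_ofReal_of_eventually_mem_Icc fun t ht => ?_
  filter_upwards [hφ.eventually_abs_norm_sub_le_on_sphere ht, self_mem_nhdsWithin]
    with r hr (hr0 : 0 < r)
  refine ENNReal.div_ofReal_mem_Icc hr0 ⟨?_, iSup₂_le fun u hu => ?_⟩
  · have hmem : z + r • v ∈ sphere z r := by simp [norm_smul, hv, hr0.le]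
    refine le_iSup₂_of_le _ hmem ?_
    rw [edist_dist, dist_eq_norm]
    refine ENNReal.ofReal_le_ofReal ?_
    have := abs_le.1 (hr _ hmem)
    simp only [add_sub_cancel_left, map_smul, norm_smul, hLv, Real.norm_of_nonneg hr0.le] at this
    linarith
  · rw [edist_dist, dist_eq_norm]
    refine ENNReal.ofReal_le_ofReal ?_
    have h1 := abs_le.1 (hr u hu)
    have h2 := hle (u - z)
    rw [← dist_eq_norm, mem_sphere.1 hu] at h2
    linarith

theorem HasFDerivAt.tendsto_iInf_sphere_edist_div (hφ : HasFDerivAt φ L z) {m : ℝ}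
    (hle : ∀ v, m * ‖v‖ ≤ ‖L v‖) (hattained : ∃ v, ‖v‖ = 1 ∧ ‖L v‖ = m) :
    Tendsto (fun r => (⨅ u ∈ sphere z r, edist (φ u) (φ z)) / ENNReal.ofReal r) (𝓝[>] 0)
      (𝓝 (ENNReal.ofReal m)) := by
  obtain ⟨v, hv, hLv⟩ := hattained
  refine ENNReal.tendsto_ofReal_of_eventually_mem_Icc fun t ht => ?_
  filter_upwards [hφ.eventually_abs_norm_sub_le_on_sphere ht, self_mem_nhdsWithin]
    with r hr (hr0 : 0 < r)
  refine ENNReal.div_ofReal_mem_Icc hr0 ⟨le_iInf₂ fun u hu => ?_, ?_⟩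
  · rw [edist_dist, dist_eq_norm]
    refine ENNReal.ofReal_le_ofReal ?_
    have h1 := abs_le.1 (hr u hu)
    have h2 := hle (u - z)
    rw [← dist_eq_norm, mem_sphere.1 hu] at h2
    linarith
  · have hmem : z + r • v ∈ sphere z r := by simp [norm_smul, hv, hr0.le]
    refine iInf₂_le_of_le _ hmem ?_
    rw [edist_dist, dist_eq_norm]
    refine ENNReal.ofReal_le_ofReal ?_
    have := abs_le.1 (hr _ hmem)
    simp only [add_sub_cancel_left, map_smul, norm_smul, hLv, Real.norm_of_nonneg hr0.le] at this
    linarith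

end Sphere

namespace Complex

theorem exists_norm_eq_one_mul_eq_mul_conj_eq (p q : ℂ) :
    ∃ v w : ℂ, ‖v‖ = 1 ∧ ‖w‖ = 1 ∧
      p * v = ‖p‖ * w ∧ q * conj v = ‖q‖ * w := by
  refine ⟨exp (↑((arg q - arg p) / 2) * I), exp (↑((arg p + arg q) / 2) * I),
    norm_exp_ofReal_mul_I _, norm_exp_ofReal_mul_I _, ?_, ?_⟩
  · nth_rw 1 [← norm_mul_exp_arg_mul_I p]
    rw [mul_assoc, ← exp_add]
    congr 2
    push_cast
    ring
  · nth_rw 1 [← norm_mul_exp_arg_mul_I q]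
    rw [← exp_conj, map_mul, conj_ofReal, conj_I, mul_assoc, ← exp_add]
    congr 2
    push_cast
    ring

theorem norm_mul_add_mul_conj_le (p q v : ℂ) :
    ‖p * v + q * conj v‖ ≤ (‖p‖ + ‖q‖) * ‖v‖ := by
  calc ‖p * v + q * conj v‖ ≤ ‖p * v‖ + ‖q * conj v‖ := norm_add_le _ _
    _ = (‖p‖ + ‖q‖) * ‖v‖ := by simp only [norm_mul, norm_conj]; ring

theorem sub_mul_norm_le_norm_mul_add_mul_conj (p q v : ℂ) :
    (‖p‖ - ‖q‖) * ‖v‖ ≤ ‖p * v + q * conj v‖ := by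
  calc (‖p‖ - ‖q‖) * ‖v‖ = ‖p * v‖ - ‖-(q * conj v)‖ := by
        simp only [norm_neg, norm_mul, norm_conj]; ring
    _ ≤ ‖p * v - -(q * conj v)‖ := norm_sub_norm_le _ _
    _ = ‖p * v + q * conj v‖ := by rw [sub_neg_eq_add]

theorem exists_norm_eq_one_norm_mul_add_mul_conj_eq_add (p q : ℂ) :
    ∃ v : ℂ, ‖v‖ = 1 ∧ ‖p * v + q * conj v‖ = ‖p‖ + ‖q‖ := by
  obtain ⟨v, w, hv, hw, hpv, hqv⟩ := exists_norm_eq_one_mul_eq_mul_conj_eq p q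
  refine ⟨v, hv, ?_⟩
  rw [hpv, hqv, ← add_mul, norm_mul, hw, mul_one, ← ofReal_add, norm_real, Real.norm_of_nonneg]
  positivity

theorem exists_norm_eq_one_norm_mul_add_mul_conj_eq_abs_sub (p q : ℂ) :
    ∃ v : ℂ, ‖v‖ = 1 ∧ ‖p * v + q * conj v‖ = |‖p‖ - ‖q‖| := by
  obtain ⟨v, w, hv, hw, hpv, hqv⟩ := exists_norm_eq_one_mul_eq_mul_conj_eq p q
  -- turning `v` into `I * v` flips the relative sign of the two aligned terms
  refine ⟨I * v, by rw [norm_mul, norm_I, hv, one_mul], ?_⟩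
  have : p * (I * v) + q * conj (I * v) = I * w * ↑(‖p‖ - ‖q‖) := by
    push_cast [map_mul, conj_I]
    linear_combination I * hpv - I * hqv
  rw [this, norm_mul, norm_mul, norm_I, hw, norm_real, Real.norm_eq_abs, one_mul, one_mul]

end Complex

open Complex in
theorem apply_eq_wirtingerP_mul_add_wirtingerQ_mul_conj (L : ℂ →L[ℝ] ℂ) (v : ℂ) :
    L v = wirtingerP L * v + wirtingerQ L * conj v := by
  have hv : v = v.re • (1 : ℂ) + v.im • I := by simp [real_smul, re_add_im]
  rw [hv, map_add, map_smul, map_smul]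
  simp only [wirtingerP, wirtingerQ, real_smul, map_add, map_mul, conj_ofReal, map_one, conj_I]
  linear_combination (v.im * L I) * I_sq

/-- At a point of differentiability with positive Jacobian, the circular distortion equals
`(|∂φ| + |∂̄φ|)/(|∂φ| - |∂̄φ|)`. -/
theorem circDist_eq_wirtinger (φ : ℂ → ℂ) (z : ℂ) (L : ℂ →L[ℝ] ℂ)
    (hderiv : HasFDerivAt φ L z)
    (hjac : ‖wirtingerQ L‖ < ‖wirtingerP L‖) :
    circDist φ z = ENNReal.ofReal
      ((‖wirtingerP L‖ + ‖wirtingerQ L‖) /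
       (‖wirtingerP L‖ - ‖wirtingerQ L‖)) := by
  set p := wirtingerP L
  set q := wirtingerQ L
  have hL : ⇑L = fun v => p * v + q * conj v :=
    funext (apply_eq_wirtingerP_mul_add_wirtingerQ_mul_conj L)
  have hpq : 0 < ‖p‖ - ‖q‖ := sub_pos.2 hjac
  have hsup := hderiv.tendsto_iSup_sphere_edist_div (M := ‖p‖ + ‖q‖)
    (by simpa only [hL] using Complex.norm_mul_add_mul_conj_le p q)
    (by simpa only [hL] using Complex.exists_norm_eq_one_norm_mul_add_mul_conj_eq_add p q)
  have hinf := hderiv.tendsto_iInf_sphere_edist_div (m := ‖p‖ - ‖q‖)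
    (by simpa only [hL] using Complex.sub_mul_norm_le_norm_mul_add_mul_conj p q)
    (by simpa only [hL, abs_of_pos hpq] using
      Complex.exists_norm_eq_one_norm_mul_add_mul_conj_eq_abs_sub p q)
  have hratio := ENNReal.Tendsto.div hsup (.inr (by simpa using hpq)) hinf
    (.inl ENNReal.ofReal_ne_top)
  rw [← ENNReal.ofReal_div_of_pos hpq] at hratio
  refine (hratio.congr' ?_).limsup_eq
  filter_upwards [self_mem_nhdsWithin] with r (hr : 0 < r)
  exact ENNReal.mul_div_mul_right _ _ (ENNReal.inv_ne_zero.2 ENNReal.ofReal_ne_top)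
    (ENNReal.inv_ne_top.2 (by simpa using hr))
end
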